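/- For any bipartite state ρ_{AB} on finite-dimensional Hilbert spaces and any extension ω_{ABE} of ρ_{AB} (i.e., Tr_E ω_{ABE} = ρ_{AB}), the conditional mutual information satisfies (1/2) I(A;B|E)_ω ≤ min{H(A)_ρ, H(B)_ρ}. Consequently the puffed entanglement E_puff(A;B)_ρ := (1/2) sup_ω I(A;B|E)_ω is at most min{H(A)_ρ, H(B)_ρ}. -/

import Mathlib

open Matrix
open scoped Kronecker Classical ComplexOrder

noncomputable section

/-- A density matrix: positive semidefinite with unit trace. -/
def IsState {n : Type*} [Fintype n] (ρ : Matrix n n ℂ) : Prop :=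
  ρ.PosSemidef ∧ ρ.trace = 1

def IsUnitaryM {n : Type*} [Fintype n] [DecidableEq n] (U : Matrix n n ℂ) : Prop :=
  U * Uᴴ = 1 ∧ Uᴴ * U = 1

/-- Von Neumann entropy, via the eigenvalues of a Hermitian matrix. -/
noncomputable def vN {n : Type*} [Fintype n] [DecidableEq n] (ρ : Matrix n n ℂ) : ℝ :=
  if h : ρ.IsHermitian then ∑ i, Real.negMulLog (h.eigenvalues i) else 0

/-- Partial trace over the second tensor factor. -/
def ptR {a b : Type*} [Fintype a] [Fintype b] (ρ : Matrix (a × b) (a × b) ℂ) :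
    Matrix a a ℂ := Matrix.of fun i j => ∑ k, ρ (i, k) (j, k)

/-- Partial trace over the first tensor factor. -/
def ptL {a b : Type*} [Fintype a] [Fintype b] (ρ : Matrix (a × b) (a × b) ℂ) :
    Matrix b b ℂ := Matrix.of fun i j => ∑ k, ρ (k, i) (k, j)

/-- Quantum mutual information I(A;B) of a bipartite state. -/
noncomputable def MI {a b : Type*} [Fintype a] [Fintype b] [DecidableEq a] [DecidableEq b]
    (ρ : Matrix (a × b) (a × b) ℂ) : ℝ :=
  vN (ptR ρ) + vN (ptL ρ) - vN ρ

/-- Marginal on the first two factors of a tripartite state on `a × (b × c)`. -/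
def mAB {a b c : Type*} [Fintype a] [Fintype b] [Fintype c]
    (ρ : Matrix (a × b × c) (a × b × c) ℂ) : Matrix (a × b) (a × b) ℂ :=
  Matrix.of fun i j => ∑ k, ρ (i.1, (i.2, k)) (j.1, (j.2, k))

/-- Marginal on the middle factor of a tripartite state on `a × (b × c)`. -/
def mB {a b c : Type*} [Fintype a] [Fintype b] [Fintype c]
    (ρ : Matrix (a × b × c) (a × b × c) ℂ) : Matrix b b ℂ :=
  Matrix.of fun i j => ∑ x : a, ∑ k : c, ρ (x, (i, k)) (x, (j, k))

/-- Marginal on the outer factors of a tripartite state on `a × (b × c)`. -/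
def mOuter {a b c : Type*} [Fintype a] [Fintype b] [Fintype c]
    (ρ : Matrix (a × b × c) (a × b × c) ℂ) : Matrix (a × c) (a × c) ℂ :=
  Matrix.of fun i j => ∑ k : b, ρ (i.1, (k, i.2)) (j.1, (k, j.2))

/-- Quantum conditional mutual information I(A;C|B) of a state on `a × (b × c)`:
`H(AB) + H(BC) - H(B) - H(ABC)`. -/
noncomputable def CMI {a b c : Type*} [Fintype a] [Fintype b] [Fintype c]
    [DecidableEq a] [DecidableEq b] [DecidableEq c]
    (ρ : Matrix (a × b × c) (a × b × c) ℂ) : ℝ :=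
  vN (mAB ρ) + vN (ptL ρ) - vN (mB ρ) - vN ρ

/-!
Write `I(A;B|E) = [H(AE) - H(A) - H(E)] + [H(EB) - H(A) - H(AEB)] + 2 H(A)`. The first bracket
is `-I(A;E) ≤ 0` by subadditivity of von Neumann entropy, the second is `≤ 0` by the Araki–Lieb
inequality, which is subadditivity applied to a purification (the paper's `I(A;F) ≥ 0`).
Exchanging the roles of `A` and `B` gives the bound by `2 H(B)`.

Subadditivity is reduced to the classical statement: in the product of the eigenbases of the
two marginals, the diagonal of `ρ` is a probability distribution on `a × b` whose marginals are the
spectra of `ρ_A` and `ρ_B`, and its Shannon entropy dominates `H(ρ)` by Schur concavity, the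
diagonal being the spectrum mixed by the doubly stochastic matrix `|U i j|²`.
-/

section Spectral

open Polynomial

variable {m n : Type*} [Fintype m] [Fintype n] [DecidableEq m] [DecidableEq n]

lemma vN_eq_sum_roots_charpoly {M : Matrix n n ℂ} (hM : M.IsHermitian) :
    vN M = (M.charpoly.roots.map fun z => Real.negMulLog z.re).sum := by
  rw [vN, dif_pos hM, hM.roots_charpoly_eq_eigenvalues, Multiset.map_map]
  simp [Function.comp_def]

/-- Entropy sees only the nonzero eigenvalues, so extra roots at `0` do not matter. -/
lemma vN_eq_of_X_pow_mul_charpoly_eq {M : Matrix m m ℂ} {N : Matrix n n ℂ}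
    (hM : M.IsHermitian) (hN : N.IsHermitian) {k l : ℕ}
    (h : X ^ k * M.charpoly = X ^ l * N.charpoly) : vN M = vN N := by
  have key : ∀ (j : ℕ) (p : ℂ[X]), p ≠ 0 →
      ((X ^ j * p).roots.map fun z : ℂ => Real.negMulLog z.re).sum
        = (p.roots.map fun z : ℂ => Real.negMulLog z.re).sum := by
    intro j p hp
    rw [roots_mul (mul_ne_zero (pow_ne_zero _ X_ne_zero) hp), roots_pow, roots_X]
    simp [Multiset.nsmul_singleton]
  rw [vN_eq_sum_roots_charpoly hM, vN_eq_sum_roots_charpoly hN,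
    ← key k _ M.charpoly_monic.ne_zero, ← key l _ N.charpoly_monic.ne_zero, h]

lemma vN_eq_of_charpoly_eq {M : Matrix m m ℂ} {N : Matrix n n ℂ} (hM : M.IsHermitian)
    (hN : N.IsHermitian) (h : M.charpoly = N.charpoly) : vN M = vN N :=
  vN_eq_of_X_pow_mul_charpoly_eq hM hN (k := 0) (l := 0) (by rw [h])

lemma vN_mul_conjTranspose_self (A : Matrix m n ℂ) : vN (A * Aᴴ) = vN (Aᴴ * A) :=
  vN_eq_of_X_pow_mul_charpoly_eq (isHermitian_mul_conjTranspose_self A)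
    (isHermitian_conjTranspose_mul_self A) (charpoly_mul_comm' A Aᴴ)

lemma vN_conjTranspose_mul_mul_unitary {U : Matrix n n ℂ} (hU : U ∈ unitaryGroup n ℂ)
    {M : Matrix n n ℂ} (hM : M.IsHermitian) : vN (Uᴴ * M * U) = vN M := by
  refine vN_eq_of_charpoly_eq (isHermitian_conjTranspose_mul_mul U hM) hM ?_
  rw [charpoly_mul_comm, ← Matrix.mul_assoc, ← star_eq_conjTranspose,
    mem_unitaryGroup_iff.mp hU, Matrix.one_mul]

lemma vN_transpose (M : Matrix n n ℂ) : vN Mᵀ = vN M := by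
  by_cases hM : M.IsHermitian
  · exact vN_eq_of_charpoly_eq hM.transpose hM (charpoly_transpose M)
  · have hMt : ¬ Mᵀ.IsHermitian := fun h => hM (by simpa using h.transpose)
    rw [vN, vN, dif_neg hM, dif_neg hMt]

lemma vN_submatrix_equiv (e : m ≃ n) (M : Matrix n n ℂ) : vN (M.submatrix e e) = vN M := by
  by_cases hM : M.IsHermitian
  · have hMe : (M.submatrix e e).IsHermitian := hM.submatrix e
    refine vN_eq_of_charpoly_eq hMe hM ?_
    rw [show M.submatrix e e = reindex e.symm e.symm M from rfl, charpoly_reindex]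
  · have hMe : ¬ (M.submatrix e e).IsHermitian := fun h =>
      hM ((isHermitian_submatrix_equiv e).mp h)
    rw [vN, vN, dif_neg hM, dif_neg hMe]

end Spectral

section PartialTrace

variable {a b : Type*} [Fintype a] [Fintype b]

lemma ptR_eq_sum_submatrix (ρ : Matrix (a × b) (a × b) ℂ) :
    ptR ρ = ∑ k : b, ρ.submatrix (·, k) (·, k) := by
  ext i j
  simp [ptR, Matrix.sum_apply]

lemma trace_ptR (ρ : Matrix (a × b) (a × b) ℂ) : (ptR ρ).trace = ρ.trace := by
  simp [Matrix.trace, ptR, Fintype.sum_prod_type]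

lemma trace_submatrix_equiv {m n : Type*} [Fintype m] [Fintype n] (e : m ≃ n)
    (M : Matrix n n ℂ) : (M.submatrix e e).trace = M.trace :=
  Fintype.sum_equiv e _ _ fun _ => rfl

lemma IsState.submatrix_equiv {m n : Type*} [Fintype m] [Fintype n] {ρ : Matrix n n ℂ}
    (hρ : IsState ρ) (e : m ≃ n) : IsState (ρ.submatrix e e) :=
  ⟨hρ.1.submatrix e, by rw [trace_submatrix_equiv, hρ.2]⟩

lemma IsState.ptR {ρ : Matrix (a × b) (a × b) ℂ} (hρ : IsState ρ) : IsState (ptR ρ) := by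
  refine ⟨?_, by rw [trace_ptR, hρ.2]⟩
  rw [ptR_eq_sum_submatrix]
  exact posSemidef_sum _ fun k _ => hρ.1.submatrix _

lemma IsState.ptL {ρ : Matrix (a × b) (a × b) ℂ} (hρ : IsState ρ) : IsState (ptL ρ) :=
  (hρ.submatrix_equiv (Equiv.prodComm b a)).ptR

lemma trace_ptR_mul [DecidableEq b] (ρ : Matrix (a × b) (a × b) ℂ) (X : Matrix a a ℂ) :
    (ptR ρ * X).trace = (ρ * (X ⊗ₖ 1)).trace := by
  simp only [trace, ptR, diag_apply, mul_apply, of_apply, Finset.sum_mul, kroneckerMap_apply,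
    one_apply, mul_ite, mul_one, mul_zero, Fintype.sum_prod_type, Finset.sum_ite_eq',
    Finset.mem_univ, if_true]
  exact Finset.sum_congr rfl fun _ _ => Finset.sum_comm

lemma trace_ptL_mul [DecidableEq a] (ρ : Matrix (a × b) (a × b) ℂ) (Y : Matrix b b ℂ) :
    (ptL ρ * Y).trace = (ρ * (1 ⊗ₖ Y)).trace := by
  simp only [trace, ptL, diag_apply, mul_apply, of_apply, Finset.sum_mul, kroneckerMap_apply,
    one_apply, ite_mul, one_mul, zero_mul, mul_ite, mul_zero, Fintype.sum_prod_type,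
    Finset.sum_ite_irrel, Finset.sum_const_zero, Finset.sum_ite_eq', Finset.mem_univ, if_true]
  rw [eq_comm, Finset.sum_comm]
  exact Finset.sum_congr rfl fun _ _ => Finset.sum_comm

lemma trace_conjTranspose_mul_mul_mul {n : Type*} [Fintype n] (W ρ Y : Matrix n n ℂ) :
    (Wᴴ * ρ * W * Y).trace = (ρ * (W * Y * Wᴴ)).trace := by
  rw [Matrix.mul_assoc, trace_mul_cycle, trace_mul_comm, Matrix.mul_assoc]

lemma trace_mul_conjTranspose_mul {m n : Type*} [Fintype m] [Fintype n]
    (M : Matrix m m ℂ) (U : Matrix m n ℂ) (X : Matrix n n ℂ) :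
    (M * (U * X * Uᴴ)).trace = (Uᴴ * M * U * X).trace := by
  rw [← Matrix.mul_assoc, trace_mul_comm, ← Matrix.mul_assoc, ← Matrix.mul_assoc]

lemma ptR_conjTranspose_kronecker_mul_mul [DecidableEq b] (ρ : Matrix (a × b) (a × b) ℂ)
    (U : Matrix a a ℂ) {V : Matrix b b ℂ} (hV : V * Vᴴ = 1) :
    ptR ((U ⊗ₖ V)ᴴ * ρ * (U ⊗ₖ V)) = Uᴴ * ptR ρ * U := by
  refine ext_iff_trace_mul_right.mpr fun X => ?_
  calc (ptR ((U ⊗ₖ V)ᴴ * ρ * (U ⊗ₖ V)) * X).trace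
      = (ρ * ((U * X * Uᴴ) ⊗ₖ (V * 1 * Vᴴ))).trace := by
        rw [trace_ptR_mul, trace_conjTranspose_mul_mul_mul, conjTranspose_kronecker,
          mul_kronecker_mul, mul_kronecker_mul]
    _ = (Uᴴ * ptR ρ * U * X).trace := by
        rw [Matrix.mul_one, hV, ← trace_ptR_mul, trace_mul_conjTranspose_mul]

lemma ptL_conjTranspose_kronecker_mul_mul [DecidableEq a] (ρ : Matrix (a × b) (a × b) ℂ)
    {U : Matrix a a ℂ} (V : Matrix b b ℂ) (hU : U * Uᴴ = 1) :
    ptL ((U ⊗ₖ V)ᴴ * ρ * (U ⊗ₖ V)) = Vᴴ * ptL ρ * V := by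
  refine ext_iff_trace_mul_right.mpr fun Y => ?_
  calc (ptL ((U ⊗ₖ V)ᴴ * ρ * (U ⊗ₖ V)) * Y).trace
      = (ρ * ((U * 1 * Uᴴ) ⊗ₖ (V * Y * Vᴴ))).trace := by
        rw [trace_ptL_mul, trace_conjTranspose_mul_mul_mul, conjTranspose_kronecker,
          mul_kronecker_mul, mul_kronecker_mul]
    _ = (Vᴴ * ptL ρ * V * Y).trace := by
        rw [Matrix.mul_one, hU, ← trace_ptL_mul, trace_mul_conjTranspose_mul]

end PartialTrace

section Classical

open Real

/-- `r log (p q / r) ≤ p q - r`, i.e. `log x ≤ x - 1` at `x = p q / r`. -/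
lemma negMulLog_add_mul_log_add_mul_log_le {r p q : ℝ} (hr : 0 ≤ r) (hrp : r ≤ p)
    (hrq : r ≤ q) : negMulLog r + r * log p + r * log q ≤ p * q - r := by
  rcases hr.eq_or_lt with rfl | hr
  · simpa using mul_nonneg hrp hrq
  have hp : 0 < p := hr.trans_le hrp
  have hq : 0 < q := hr.trans_le hrq
  have hlog : log (p * q / r) ≤ p * q / r - 1 := log_le_sub_one_of_pos (by positivity)
  rw [log_div (by positivity) hr.ne', log_mul hp.ne' hq.ne'] at hlog
  have hmul := mul_le_mul_of_nonneg_left hlog hr.le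
  have hcancel : r * (p * q / r) = p * q := by field_simp
  rw [negMulLog]
  linarith

lemma sum_sum_negMulLog_le {a b : Type*} [Fintype a] [Fintype b] (r : a → b → ℝ)
    (hr : ∀ i j, 0 ≤ r i j) (htot : ∑ i, ∑ j, r i j = 1) :
    ∑ i, ∑ j, negMulLog (r i j)
      ≤ ∑ i, negMulLog (∑ j, r i j) + ∑ j, negMulLog (∑ i, r i j) := by
  set p := fun i => ∑ j, r i j
  set q := fun j => ∑ i, r i j
  have hp : ∑ i, p i = 1 := htot
  have hq : ∑ j, q j = 1 := by rw [Finset.sum_comm]; exact htot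
  have hrp (i j) : r i j ≤ p i := Finset.single_le_sum (fun k _ => hr i k) (Finset.mem_univ j)
  have hrq (i j) : r i j ≤ q j := Finset.single_le_sum (fun k _ => hr k j) (Finset.mem_univ i)
  have hlogp : ∑ i, ∑ j, r i j * log (p i) = -∑ i, negMulLog (p i) := by
    simp [negMulLog, ← Finset.sum_mul, p]
  have hlogq : ∑ i, ∑ j, r i j * log (q j) = -∑ j, negMulLog (q j) := by
    rw [Finset.sum_comm]
    simp [negMulLog, ← Finset.sum_mul, q]
  have key := Finset.sum_le_sum fun i (_ : i ∈ Finset.univ) => Finset.sum_le_sum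
    fun j (_ : j ∈ Finset.univ) => negMulLog_add_mul_log_add_mul_log_le (hr i j) (hrp i j) (hrq i j)
  simp only [Finset.sum_add_distrib, Finset.sum_sub_distrib, hlogp, hlogq,
    ← Finset.sum_mul_sum, hp, hq] at key
  linarith

lemma sum_negMulLog_le_sum_negMulLog_mulVec {n : Type*} [Fintype n] [DecidableEq n]
    {S : Matrix n n ℝ} (hS : S ∈ doublyStochastic ℝ n) {x : n → ℝ} (hx : ∀ i, 0 ≤ x i) :
    ∑ i, negMulLog (x i) ≤ ∑ i, negMulLog ((S *ᵥ x) i) := by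
  calc ∑ j, negMulLog (x j) = ∑ i, ∑ j, S i j * negMulLog (x j) := by
        rw [Finset.sum_comm]
        simp [← Finset.sum_mul, sum_col_of_mem_doublyStochastic hS]
    _ ≤ ∑ i, negMulLog ((S *ᵥ x) i) := Finset.sum_le_sum fun i _ => by
        simpa [mulVec, dotProduct] using concaveOn_negMulLog.le_map_sum
          (fun j _ => nonneg_of_mem_doublyStochastic hS) (sum_row_of_mem_doublyStochastic hS i)
          (fun j _ => Set.mem_Ici.mpr (hx j))

end Classical

section Diagonal

variable {n : Type*} [Fintype n] [DecidableEq n]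

lemma normSq_mem_doublyStochastic {U : Matrix n n ℂ} (hU : U ∈ unitaryGroup n ℂ) :
    Matrix.of (fun i j => Complex.normSq (U i j)) ∈ doublyStochastic ℝ n := by
  have h1 : U * Uᴴ = 1 := mem_unitaryGroup_iff.mp hU
  have h2 : Uᴴ * U = 1 := mem_unitaryGroup_iff'.mp hU
  refine mem_doublyStochastic_iff_sum.mpr ⟨fun i j => Complex.normSq_nonneg _, fun i => ?_,
    fun j => ?_⟩
  · have := congrFun (congrFun h1 i) i
    simp only [mul_apply, conjTranspose_apply, one_apply_eq, Complex.star_def,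
      Complex.mul_conj] at this
    exact_mod_cast this
  · have := congrFun (congrFun h2 j) j
    simp only [mul_apply, conjTranspose_apply, one_apply_eq, Complex.star_def, mul_comm _ (U _ _),
      Complex.mul_conj] at this
    exact_mod_cast this

lemma Matrix.IsHermitian.conjTranspose_eigenvectorUnitary_mul_mul {M : Matrix n n ℂ}
    (hM : M.IsHermitian) :
    (hM.eigenvectorUnitary : Matrix n n ℂ)ᴴ * M * hM.eigenvectorUnitary
      = diagonal (fun i => (hM.eigenvalues i : ℂ)) := by
  simpa [Unitary.conjStarAlgAut_apply, star_eq_conjTranspose, Function.comp_def] using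
    hM.conjStarAlgAut_star_eigenvectorUnitary

lemma vN_le_sum_negMulLog_diag {ρ : Matrix n n ℂ} (hρ : ρ.PosSemidef) :
    vN ρ ≤ ∑ i, Real.negMulLog (ρ i i).re := by
  set U : Matrix n n ℂ := (hρ.1.eigenvectorUnitary : Matrix n n ℂ)
  set μ := hρ.1.eigenvalues
  set S : Matrix n n ℝ := Matrix.of fun i j => Complex.normSq (U i j)
  have hspec : ρ = U * diagonal (fun m => (μ m : ℂ)) * Uᴴ := by
    simpa [Unitary.conjStarAlgAut_apply, star_eq_conjTranspose, Function.comp_def] using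
      hρ.1.spectral_theorem
  have hdiag (i : n) : (ρ i i).re = (S *ᵥ μ) i := by
    have : ρ i i = ((S *ᵥ μ) i : ℂ) := by
      rw [hspec, mul_apply]
      simp only [mul_diagonal, conjTranspose_apply, mulVec, dotProduct, S, of_apply]
      push_cast
      refine Finset.sum_congr rfl fun m _ => ?_
      rw [Complex.normSq_eq_conj_mul_self, Complex.star_def]
      ring
    rw [this, Complex.ofReal_re]
  rw [vN, dif_pos hρ.1]
  simp only [hdiag]
  exact sum_negMulLog_le_sum_negMulLog_mulVec
    (normSq_mem_doublyStochastic hρ.1.eigenvectorUnitary.2) hρ.eigenvalues_nonneg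

end Diagonal

section Subadditivity

variable {a b : Type*} [Fintype a] [Fintype b] [DecidableEq a] [DecidableEq b]

theorem vN_le_vN_ptR_add_vN_ptL {ρ : Matrix (a × b) (a × b) ℂ} (hρ : IsState ρ) :
    vN ρ ≤ vN (ptR ρ) + vN (ptL ρ) := by
  have hA := hρ.ptR.1.1
  have hB := hρ.ptL.1.1
  set UA : Matrix a a ℂ := (hA.eigenvectorUnitary : Matrix a a ℂ)
  set UB : Matrix b b ℂ := (hB.eigenvectorUnitary : Matrix b b ℂ)
  set W := UA ⊗ₖ UB
  have hW : W ∈ unitaryGroup (a × b) ℂ :=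
    kronecker_mem_unitary hA.eigenvectorUnitary.2 hB.eigenvectorUnitary.2
  set σ := Wᴴ * ρ * W
  have hσ : σ.PosSemidef := hρ.1.conjTranspose_mul_mul_same W
  set r : a → b → ℝ := fun i j => (σ (i, j) (i, j)).re
  have hrow (i : a) : ∑ j, r i j = hA.eigenvalues i := by
    have := congrFun (congrFun (ptR_conjTranspose_kronecker_mul_mul ρ UA
      (mem_unitaryGroup_iff.mp hB.eigenvectorUnitary.2)) i) i
    rw [hA.conjTranspose_eigenvectorUnitary_mul_mul, diagonal_apply_eq] at this
    simpa [r, ptR] using congrArg Complex.re this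
  have hcol (j : b) : ∑ i, r i j = hB.eigenvalues j := by
    have := congrFun (congrFun (ptL_conjTranspose_kronecker_mul_mul ρ UB
      (mem_unitaryGroup_iff.mp hA.eigenvectorUnitary.2)) j) j
    rw [hB.conjTranspose_eigenvectorUnitary_mul_mul, diagonal_apply_eq] at this
    simpa [r, ptL] using congrArg Complex.re this
  have htot : ∑ i, ∑ j, r i j = 1 := by
    have := hA.trace_eq_sum_eigenvalues
    rw [hρ.ptR.2] at this
    simpa [hrow] using congrArg Complex.re this.symm
  calc vN ρ = vN σ := (vN_conjTranspose_mul_mul_unitary hW hρ.1.1).symm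
    _ ≤ ∑ i, ∑ j, Real.negMulLog (r i j) := by
        simpa [Fintype.sum_prod_type] using vN_le_sum_negMulLog_diag hσ
    _ ≤ vN (ptR ρ) + vN (ptL ρ) := by
        have := sum_sum_negMulLog_le r (fun i j => (Complex.nonneg_iff.mp hσ.diag_nonneg).1)
          htot
        rw [vN, vN, dif_pos hA, dif_pos hB]
        simpa only [hrow, hcol] using this

end Subadditivity

section ArakiLieb

variable {a b : Type*} [Fintype a] [Fintype b] [DecidableEq a] [DecidableEq b]

open scoped MatrixOrder in
lemma Matrix.PosSemidef.exists_eq_mul_conjTranspose {n : Type*} [Fintype n] [DecidableEq n]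
    {ρ : Matrix n n ℂ} (hρ : ρ.PosSemidef) : ∃ P : Matrix n n ℂ, ρ = P * Pᴴ := by
  refine ⟨CFC.sqrt ρ, ?_⟩
  rw [← star_eq_conjTranspose, (CFC.sqrt_nonneg ρ).isSelfAdjoint.star_eq,
    CFC.sqrt_mul_sqrt_self ρ hρ.nonneg]

/-- `P * Pᴴ` is the `ab`-marginal of a pure state on `a × b × f` with coefficients `P`.
Regrouped as `(a × f) × b`, the same pure state has coefficient matrix `M`, and the `b`-marginal
and the `af`-marginal of a pure state have the same entropy. -/
lemma vN_ptL_mul_conjTranspose_le {f : Type*} [Fintype f] [DecidableEq f]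
    (P : Matrix (a × b) f ℂ) (htr : (P * Pᴴ).trace = 1) :
    vN (ptL (P * Pᴴ)) ≤ vN (ptR (P * Pᴴ)) + vN (P * Pᴴ) := by
  set M : Matrix (a × f) b ℂ := Matrix.of fun x v => P (x.1, v) x.2
  have hL : Mᴴ * M = (ptL (P * Pᴴ))ᵀ := by
    ext v v'
    simp [M, mul_apply, ptL, Fintype.sum_prod_type, mul_comm]
  have hR : ptR (M * Mᴴ) = ptR (P * Pᴴ) := by
    ext u u'
    simp only [ptR, mul_apply, of_apply, conjTranspose_apply, M]
    exact Finset.sum_comm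
  have hF : ptL (M * Mᴴ) = (Pᴴ * P)ᵀ := by
    ext g g'
    simp [M, mul_apply, ptL, Fintype.sum_prod_type, mul_comm]
  have hM : IsState (M * Mᴴ) :=
    ⟨posSemidef_self_mul_conjTranspose M, by rw [← trace_ptR, hR, trace_ptR, htr]⟩
  calc vN (ptL (P * Pᴴ)) = vN (M * Mᴴ) := by
        rw [vN_mul_conjTranspose_self, hL, vN_transpose]
    _ ≤ vN (ptR (M * Mᴴ)) + vN (ptL (M * Mᴴ)) := vN_le_vN_ptR_add_vN_ptL hM
    _ = vN (ptR (P * Pᴴ)) + vN (P * Pᴴ) := by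
        rw [hR, hF, vN_transpose, vN_mul_conjTranspose_self]

theorem vN_ptL_le_vN_ptR_add_vN {ρ : Matrix (a × b) (a × b) ℂ} (hρ : IsState ρ) :
    vN (ptL ρ) ≤ vN (ptR ρ) + vN ρ := by
  obtain ⟨P, rfl⟩ := hρ.1.exists_eq_mul_conjTranspose
  exact vN_ptL_mul_conjTranspose_le P hρ.2

theorem vN_ptR_le_vN_ptL_add_vN {ρ : Matrix (a × b) (a × b) ℂ} (hρ : IsState ρ) :
    vN (ptR ρ) ≤ vN (ptL ρ) + vN ρ := by
  have := vN_ptL_le_vN_ptR_add_vN (hρ.submatrix_equiv (Equiv.prodComm b a))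
  rwa [vN_submatrix_equiv] at this

end ArakiLieb

section ConditionalMutualInformation

variable {a b c : Type*} [Fintype a] [Fintype b] [Fintype c]

lemma mAB_eq_ptR_submatrix_prodAssoc (ω : Matrix (a × b × c) (a × b × c) ℂ) :
    mAB ω = ptR (ω.submatrix (Equiv.prodAssoc a b c) (Equiv.prodAssoc a b c)) :=
  rfl

lemma ptR_mAB (ω : Matrix (a × b × c) (a × b × c) ℂ) : ptR (mAB ω) = ptR ω := by
  ext i i'
  simp [ptR, mAB, Fintype.sum_prod_type]

lemma ptL_mAB (ω : Matrix (a × b × c) (a × b × c) ℂ) : ptL (mAB ω) = mB ω :=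
  rfl

lemma ptR_ptL (ω : Matrix (a × b × c) (a × b × c) ℂ) : ptR (ptL ω) = mB ω := by
  ext e e'
  exact Finset.sum_comm

lemma ptL_submatrix_prodAssoc (ω : Matrix (a × b × c) (a × b × c) ℂ) :
    ptL (ω.submatrix (Equiv.prodAssoc a b c) (Equiv.prodAssoc a b c)) = ptL (ptL ω) := by
  ext k k'
  simp only [ptL, submatrix_apply, Equiv.prodAssoc_apply, Fintype.sum_prod_type, of_apply]
  exact Finset.sum_comm

lemma ptR_mOuter (ω : Matrix (a × b × c) (a × b × c) ℂ) : ptR (mOuter ω) = ptR ω := by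
  ext i i'
  simp only [ptR, mOuter, of_apply, Fintype.sum_prod_type]
  exact Finset.sum_comm

lemma ptL_mOuter (ω : Matrix (a × b × c) (a × b × c) ℂ) : ptL (mOuter ω) = ptL (ptL ω) := by
  ext k k'
  simp only [ptL, mOuter, of_apply]
  exact Finset.sum_comm

variable [DecidableEq a] [DecidableEq b] [DecidableEq c] {ω : Matrix (a × b × c) (a × b × c) ℂ}

theorem CMI_le_two_mul_vN_ptR (hω : IsState ω) : CMI ω ≤ 2 * vN (ptR ω) := by
  have hAB : vN (mAB ω) ≤ vN (ptR ω) + vN (mB ω) := by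
    have hmAB : IsState (mAB ω) := (hω.submatrix_equiv (Equiv.prodAssoc a b c)).ptR
    simpa only [ptR_mAB, ptL_mAB] using vN_le_vN_ptR_add_vN_ptL hmAB
  have hBC := vN_ptL_le_vN_ptR_add_vN hω
  rw [CMI]
  linarith

theorem CMI_le_two_mul_vN_ptL_ptL (hω : IsState ω) : CMI ω ≤ 2 * vN (ptL (ptL ω)) := by
  have hBC : vN (ptL ω) ≤ vN (mB ω) + vN (ptL (ptL ω)) := by
    simpa only [ptR_ptL] using vN_le_vN_ptR_add_vN_ptL hω.ptL
  have hAB : vN (mAB ω) ≤ vN (ptL (ptL ω)) + vN ω := by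
    have := vN_ptR_le_vN_ptL_add_vN (hω.submatrix_equiv (Equiv.prodAssoc a b c))
    rwa [← mAB_eq_ptR_submatrix_prodAssoc, ptL_submatrix_prodAssoc, vN_submatrix_equiv] at this
  rw [CMI]
  linarith

end ConditionalMutualInformation

theorem half_cmi_le_min_entropy_general {A B : Type*} [Fintype A] [Fintype B]
    [DecidableEq A] [DecidableEq B]
    (ρ : Matrix (A × B) (A × B) ℂ)
    (E : Type*) [Fintype E] [DecidableEq E]
    (ω : Matrix (A × E × B) (A × E × B) ℂ) (hω : IsState ω)
    (hext : mOuter ω = ρ) :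
    CMI ω / 2 ≤ min (vN (ptR ρ)) (vN (ptL ρ)) := by
  rw [← hext, ptR_mOuter, ptL_mOuter]
  exact le_min (by linarith [CMI_le_two_mul_vN_ptR hω])
    (by linarith [CMI_le_two_mul_vN_ptL_ptL hω])

/-- For any extension `ω` (on `A × (E × B)`) of a bipartite state `ρ_{AB}`,
`(1/2) I(A;B|E)_ω ≤ min {H(A), H(B)}`; hence the puffed entanglement is bounded by
`min {H(A), H(B)}`. -/
theorem half_cmi_le_min_entropy {A B : Type*} [Fintype A] [Fintype B]
    [DecidableEq A] [DecidableEq B]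
    (ρ : Matrix (A × B) (A × B) ℂ) (hρ : IsState ρ)
    (E : Type*) [Fintype E] [DecidableEq E]
    (ω : Matrix (A × E × B) (A × E × B) ℂ) (hω : IsState ω)
    (hext : mOuter ω = ρ) :
    CMI ω / 2 ≤ min (vN (ptR ρ)) (vN (ptL ρ)) :=
  half_cmi_le_min_entropy_general ρ E ω hω hext

end
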